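/- arXiv:2307.09128 — 2 statements merged into one kernel-verified Lean document; each statement's English description precedes it below -/
import Mathlib

section
/- Let g: [0,∞) → ℝ be continuous, strictly decreasing, strictly convex on (0,∞), with g(0) = β > 0 and lim_{x→∞} g(x) = 0, and let y* > 0. If y* β < 1, then the equation 1 - x = y* g(x) has exactly one solution in (0,1). -/
/-!
Put `H x = 1 - x - y* g x`. Then `H 0 = 1 - y* β > 0` and `H 1 = -y* g 1 < 0`, since a strictly
decreasing function tending to `0` is positive; so `H` has a zero in `(0,1)`. `H` is concave on
`(0,∞)` and positive at the endpoint `0`, so it cannot vanish at two points `a < b`: a point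
`ε ∈ (0,a)` with `H ε > 0` and `H a = 0` would force `H b < 0` by concavity.
-/

open Set Filter Topology

theorem StrictAntiOn.lt_of_tendsto_atTop {g : ℝ → ℝ} {a c x : ℝ} (hg : StrictAntiOn g (Ici a))
    (hlim : Tendsto g atTop (𝓝 c)) (hx : x ∈ Ici a) : c < g x := by
  have hx' : x + 1 ∈ Ici a := by simp only [mem_Ici] at hx ⊢; linarith
  have hc : c ≤ g (x + 1) :=
    le_of_tendsto hlim <| (eventually_ge_atTop (x + 1)).mono fun t ht =>
      hg.antitoneOn hx' (hx'.trans ht) ht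
  exact hc.trans_lt (hg hx hx' (lt_add_one x))

namespace ConcaveOn

variable {f : ℝ → ℝ} {p : ℝ}

theorem pos_of_pos_endpoint (hf : ConcaveOn ℝ (Ioi p) f) (hcont : ContinuousWithinAt f (Ioi p) p)
    (hp : 0 < f p) {a b : ℝ} (hpa : p < a) (hab : a < b) (hb : 0 ≤ f b) : 0 < f a := by
  by_contra! ha
  obtain ⟨ε, hfε, hε⟩ := ((hcont.eventually_const_lt hp).and (Ioo_mem_nhdsGT hpa)).exists
  have hfb : f b < f a := hf.lt_right_of_left_lt hε.1 (hpa.trans hab)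
    (Ioo_subset_openSegment ⟨hε.2, hab⟩) (ha.trans_lt hfε)
  linarith

theorem eq_of_pos_endpoint (hf : ConcaveOn ℝ (Ioi p) f) (hcont : ContinuousWithinAt f (Ioi p) p)
    (hp : 0 < f p) {a b : ℝ} (ha : p < a) (hb : p < b) (hfa : f a = 0) (hfb : f b = 0) :
    a = b := by
  rcases lt_trichotomy a b with hab | rfl | hab
  · exact absurd (hf.pos_of_pos_endpoint hcont hp ha hab hfb.ge) hfa.not_gt
  · rfl
  · exact absurd (hf.pos_of_pos_endpoint hcont hp hb hab hfa.ge) hfb.not_gt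

end ConcaveOn

theorem stmt_7_general (g : ℝ → ℝ) (β ystar : ℝ)
    (hcont : ContinuousOn g (Set.Ici 0))
    (hanti : StrictAntiOn g (Set.Ici 0))
    (hconv : StrictConvexOn ℝ (Set.Ioi 0) g)
    (h0 : g 0 = β)
    (hlim : Filter.Tendsto g Filter.atTop (nhds 0))
    (hy : 0 < ystar) (hyβ : ystar * β < 1) :
    ∃! x : ℝ, x ∈ Set.Ioo (0:ℝ) 1 ∧ 1 - x = ystar * g x := by
  set H : ℝ → ℝ := fun x => 1 - x - ystar * g x
  have hH_cont : ContinuousOn H (Ici 0) := by fun_prop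
  have hH_concave : ConcaveOn ℝ (Ioi 0) H :=
    ((concaveOn_const 1 (convex_Ioi 0)).sub (convexOn_id (convex_Ioi 0))).sub
      (hconv.convexOn.smul hy.le)
  have hH0 : 0 < H 0 := by simp only [H, h0]; linarith
  have hH1 : H 1 < 0 := by
    have := mul_pos hy (hanti.lt_of_tendsto_atTop hlim (mem_Ici.2 zero_le_one))
    simp only [H]; linarith
  have hH_zero_iff (x : ℝ) : 1 - x = ystar * g x ↔ H x = 0 := by simp only [H, sub_eq_zero]
  obtain ⟨x, hx, hHx⟩ := intermediate_value_Ioo' zero_le_one (hH_cont.mono Icc_subset_Ici_self)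
    ⟨hH1, hH0⟩
  refine ⟨x, ⟨hx, (hH_zero_iff x).2 hHx⟩, fun y ⟨hy01, hyx⟩ => ?_⟩
  exact hH_concave.eq_of_pos_endpoint ((hH_cont 0 self_mem_Ici).mono Ioi_subset_Ici_self) hH0
    hy01.1 hx.1 ((hH_zero_iff y).1 hyx) hHx

/-- If `g` is continuous and strictly decreasing on `[0,∞)`, strictly convex on `(0,∞)`,
`g 0 = β > 0`, `g → 0` at infinity, and `y* > 0` with `y* β < 1`, then
`1 - x = y* g x` has exactly one solution in `(0,1)`. -/
theorem stmt_7 (g : ℝ → ℝ) (β ystar : ℝ)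
    (hcont : ContinuousOn g (Set.Ici 0))
    (hanti : StrictAntiOn g (Set.Ici 0))
    (hconv : StrictConvexOn ℝ (Set.Ioi 0) g)
    (h0 : g 0 = β) (hβ : 0 < β)
    (hlim : Filter.Tendsto g Filter.atTop (nhds 0))
    (hy : 0 < ystar) (hyβ : ystar * β < 1) :
    ∃! x : ℝ, x ∈ Set.Ioo (0:ℝ) 1 ∧ 1 - x = ystar * g x :=
  stmt_7_general g β ystar hcont hanti hconv h0 hlim hy hyβ
end

section
/- At an interior equilibrium (x*, y*, z*) with all coordinates positive, the characteristic polynomial of the Jacobian of the Hastings–Powell system is λ³ + P₂λ² + P₁λ + P₀ with P₀ = -d₂ z* f₂'(y*) (1 - 2x* - y* f₁'(x*)). In particular, if 1 - 2x* - y* f₁'(x*) > 0 then P₀ < 0, so the Jacobian has at least one eigenvalue with positive real part and the equilibrium is unstable. -/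
open Matrix Polynomial

lemma cubic_pos_real_root (P₂ P₁ P₀ : ℝ) (h : P₀ < 0) :
    ∃ r : ℝ, 0 < r ∧ r ^ 3 + P₂ * r ^ 2 + P₁ * r + P₀ = 0 := by
  set q : ℝ[X] := X ^ 3 + C P₂ * X ^ 2 + C P₁ * X + C P₀ with hq
  have hdeg : q.degree = 3 := by
    unfold q
    compute_degree!
  have hlead : q.leadingCoeff = 1 := by
    rw [Polynomial.leadingCoeff, Polynomial.natDegree_eq_of_degree_eq_some hdeg]
    unfold q
    simp [coeff_X_pow]
  have htop : Filter.Tendsto (fun x => q.eval x) Filter.atTop Filter.atTop := by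
    apply Polynomial.tendsto_atTop_of_leadingCoeff_nonneg
    · rw [hdeg]; norm_num
    · rw [hlead]; norm_num
  obtain ⟨M, hM, hM1⟩ := ((htop.eventually_ge_atTop 0).and (Filter.eventually_ge_atTop 1)).exists
  have h0 : q.eval 0 < 0 := by simp [hq, h]
  have hcont : ContinuousOn (fun x => q.eval x) (Set.Icc 0 M) :=
    (Polynomial.continuous q).continuousOn
  have hmem : (0 : ℝ) ∈ Set.Icc (q.eval 0) (q.eval M) := ⟨le_of_lt h0, hM⟩
  obtain ⟨r, hr, hr0⟩ := intermediate_value_Icc (by linarith : (0:ℝ) ≤ M) hcont hmem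
  refine ⟨r, ?_, ?_⟩
  · rcases lt_or_eq_of_le hr.1 with h' | h'
    · exact h'
    · exfalso; rw [← h'] at hr0; linarith
  · have := hr0
    simp [hq] at this
    linarith

/-- At an interior equilibrium `(x*, y*, z*)` (all coordinates positive) the characteristic
polynomial of the Jacobian is `λ³ + P₂λ² + P₁λ + P₀` with
`P₀ = -d₂ z* f₂'(y*) (1 - 2x* - y* f₁'(x*))`; if `1 - 2x* - y* f₁'(x*) > 0` then `P₀ < 0`
and the Jacobian has an eigenvalue with positive real part, so the equilibrium is unstable. -/
theorem stmt_15 (xs ys zs d₁ d₂ f₁x f₁x' f₂y' : ℝ)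
    (hx : 0 < xs) (hy : 0 < ys) (hz : 0 < zs) (hd₂ : 0 < d₂)
    (hf₂y' : 0 < f₂y') :
    let J : Matrix (Fin 3) (Fin 3) ℝ :=
      !![1 - 2 * xs - ys * f₁x', -f₁x, 0;
         ys * f₁x', f₁x - d₁ - zs * f₂y', -d₂;
         0, zs * f₂y', 0]
    let P₂ : ℝ := -((1 - 2 * xs - ys * f₁x') + (f₁x - d₁ - zs * f₂y'))
    let P₁ : ℝ := (1 - 2 * xs - ys * f₁x') * (f₁x - d₁ - zs * f₂y')
        + ys * f₁x * f₁x' + d₂ * zs * f₂y'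
    let P₀ : ℝ := -d₂ * zs * f₂y' * (1 - 2 * xs - ys * f₁x')
    J.charpoly = X ^ 3 + C P₂ * X ^ 2 + C P₁ * X + C P₀ ∧
    (0 < 1 - 2 * xs - ys * f₁x' →
      P₀ < 0 ∧ ∃ μ : ℂ, (Polynomial.aeval μ) J.charpoly = 0 ∧ 0 < μ.re) := by
  intro J P₂ P₁ P₀
  have hcp : J.charpoly = X ^ 3 + C P₂ * X ^ 2 + C P₁ * X + C P₀ := by
    rw [Matrix.charpoly, det_fin_three]
    simp [charmatrix_apply, J, P₂, P₁, P₀, map_sub, map_add, _root_.map_mul, map_neg]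
    ring
  refine ⟨hcp, fun hpos => ?_⟩
  have hP₀ : P₀ < 0 := by
    unfold P₀
    have : 0 < d₂ * zs * f₂y' * (1 - 2 * xs - ys * f₁x') := by positivity
    linarith
  refine ⟨hP₀, ?_⟩
  obtain ⟨r, hr, hroot⟩ := cubic_pos_real_root P₂ P₁ P₀ hP₀
  refine ⟨(r : ℂ), ?_, by simpa using hr⟩
  rw [hcp]
  simp only [map_add, _root_.map_mul, map_pow, aeval_X, aeval_C]
  have : ((r : ℂ) ^ 3 + (P₂ : ℂ) * (r : ℂ) ^ 2 + (P₁ : ℂ) * (r : ℂ) + (P₀ : ℂ))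
      = ((r ^ 3 + P₂ * r ^ 2 + P₁ * r + P₀ : ℝ) : ℂ) := by push_cast; ring
  simp only [Complex.coe_algebraMap]
  rw [this, hroot, Complex.ofReal_zero]
end
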